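/- arXiv:2601.20324 — 2 statements merged into one kernel-verified Lean document; each statement's English description precedes it below -/
import Mathlib

section
/- Let h : [0,∞) → R^q and z : [0,∞) → R^q be differentiable, let Γ : [0,∞) → R^{q×q} be continuous with Γ(t) Metzler for every t, and suppose h'(t) ≥ Γ(t) h(t) componentwise, z'(t) = Γ(t) z(t), and h(0) = z(0). Then h(t) ≥ z(t) componentwise for all t ≥ 0. -/
open Set Filter Topology

def IsMetzler {q : ℕ} (K : Matrix (Fin q) (Fin q) ℝ) : Prop :=
  ∀ i j, i ≠ j → 0 ≤ K i j

theorem stmt6 {q : ℕ}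
    (h z : ℝ → Fin q → ℝ)
    (Γ : ℝ → Matrix (Fin q) (Fin q) ℝ)
    (hΓc : Continuous Γ)
    (hΓM : ∀ t, 0 ≤ t → IsMetzler (Γ t))
    (hhdiff : ∀ i, Differentiable ℝ (fun t => h t i))
    (hzode : ∀ t, 0 ≤ t → ∀ i,
      HasDerivAt (fun s => z s i) (∑ j, Γ t i j * z t j) t)
    (hhineq : ∀ t, 0 ≤ t → ∀ i,
      ∑ j, Γ t i j * h t j ≤ deriv (fun s => h s i) t)
    (h0 : h 0 = z 0) :
    ∀ t, 0 ≤ t → ∀ i, z t i ≤ h t i := by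
  intro t ht i
  have hΓij : ∀ a b, Continuous fun s => Γ s a b := fun a b =>
    (continuous_apply b).comp ((continuous_apply a).comp hΓc)
  set B : ℝ → ℝ := fun s => ∑ a, ∑ b, |Γ s a b| with hBdef
  have hBcont : Continuous B := by
    apply continuous_finset_sum; intro a _
    apply continuous_finset_sum; intro b _
    exact (hΓij a b).abs
  obtain ⟨s₀, hs₀mem, hs₀max⟩ :=
    isCompact_Icc.exists_isMaxOn (nonempty_Icc.2 ht) hBcont.continuousOn
  have hBnonneg : ∀ s, 0 ≤ B s := fun s =>
    Finset.sum_nonneg fun a _ => Finset.sum_nonneg fun b _ => abs_nonneg _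
  set C : ℝ := B s₀ + 1 with hCdef
  have main : ∀ ε : ℝ, 0 < ε → 0 < h t i - z t i + ε * Real.exp (C * t) := by
    intro ε hε
    set f : Fin q → ℝ → ℝ := fun k s => h s k - z s k + ε * Real.exp (C * s) with hfdef
    have hfcont : ∀ k s, 0 ≤ s → ContinuousAt (f k) s := by
      intro k s hs
      have h1 : ContinuousAt (fun u => h u k) s := ((hhdiff k).continuous).continuousAt
      have h2 : ContinuousAt (fun u => z u k) s := (hzode s hs k).continuousAt
      have h3 : ContinuousAt (fun u : ℝ => ε * Real.exp (C * u)) s := by fun_prop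
      exact (h1.sub h2).add h3
    set S : Set ℝ := {s | s ∈ Icc 0 t ∧ ∃ k, f k s ≤ 0} with hSdef
    have hSempty : S = ∅ := by
      by_contra hne
      have hSne : S.Nonempty := nonempty_iff_ne_empty.2 hne
      have hScl : IsClosed S := by
        have hrw : S = ⋃ k, (Icc 0 t ∩ f k ⁻¹' Iic 0) := by
          ext s
          simp only [hSdef, Set.mem_setOf_eq, Set.mem_iUnion, Set.mem_inter_iff,
            Set.mem_preimage, Set.mem_Iic]
          constructor
          · rintro ⟨hm, k, hk⟩; exact ⟨k, hm, hk⟩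
          · rintro ⟨k, hm, hk⟩; exact ⟨hm, k, hk⟩
        rw [hrw]
        apply isClosed_iUnion_of_finite
        intro k
        exact ContinuousOn.preimage_isClosed_of_isClosed
          (fun s hs => (hfcont k s hs.1).continuousWithinAt) isClosed_Icc isClosed_Iic
      have hScomp : IsCompact S := isCompact_Icc.of_isClosed_subset hScl (fun s hs => hs.1)
      obtain ⟨t₀, ht₀S, ht₀lb⟩ := hScomp.exists_isLeast hSne
      obtain ⟨⟨ht₀0, ht₀t⟩, k, hk⟩ := ht₀S
      have hw0 : ∀ j, h 0 j - z 0 j = 0 := by intro j; rw [h0]; ring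
      have h0notS : (0:ℝ) ∉ S := by
        rintro ⟨-, j, hj⟩
        have hje : f j 0 = ε := by simp [hfdef, hw0 j]
        rw [hje] at hj; linarith
      have ht₀pos : 0 < t₀ := by
        rcases lt_or_eq_of_le ht₀0 with hlt | heq
        · exact hlt
        · exact absurd (heq ▸ (⟨⟨ht₀0, ht₀t⟩, k, hk⟩ : t₀ ∈ S)) h0notS
      have pos_before : ∀ s, 0 ≤ s → s < t₀ → ∀ j, 0 < f j s := by
        intro s hs0 hst j
        by_contra hle
        push_neg at hle
        have hsS : s ∈ S := ⟨⟨hs0, hst.le.trans ht₀t⟩, j, hle⟩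
        exact absurd (ht₀lb hsS) (not_le.2 hst)
      have ge_at : ∀ j, 0 ≤ f j t₀ := by
        intro j
        have htd : Tendsto (f j) (𝓝[<] t₀) (𝓝 (f j t₀)) :=
          ((hfcont j t₀ ht₀0).tendsto).mono_left nhdsWithin_le_nhds
        refine ge_of_tendsto htd ?_
        filter_upwards [Ioo_mem_nhdsLT_of_mem (right_mem_Ioc.2 ht₀pos)] with s hs
        exact (pos_before s hs.1.le hs.2 j).le
      have eq_at : f k t₀ = 0 := le_antisymm hk (ge_at k)
      set E := Real.exp (C * t₀) with hEdef
      have hEpos : 0 < E := Real.exp_pos _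
      -- derivative of f k at t₀
      have hdh : HasDerivAt (fun s => h s k) (deriv (fun s => h s k) t₀) t₀ :=
        (hhdiff k t₀).hasDerivAt
      have hdz := hzode t₀ ht₀0 k
      have hde : HasDerivAt (fun s : ℝ => ε * Real.exp (C * s)) (ε * (E * C)) t₀ := by
        have h1 : HasDerivAt (fun s : ℝ => C * s) C t₀ := by
          simpa using (hasDerivAt_id t₀).const_mul C
        have h2 := (h1.exp).const_mul ε
        simpa [hEdef, mul_comm, mul_assoc, mul_left_comm] using h2
      have hdf : HasDerivAt (f k)
          (deriv (fun s => h s k) t₀ - (∑ j, Γ t₀ k j * z t₀ j) + ε * (E * C)) t₀ :=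
        (hdh.sub hdz).add hde
      set d := deriv (fun s => h s k) t₀ - (∑ j, Γ t₀ k j * z t₀ j) + ε * (E * C) with hddef
      -- d > 0
      have hrow : ∑ j, |Γ t₀ k j| ≤ B s₀ := by
        refine le_trans ?_ (hs₀max ⟨ht₀0, ht₀t⟩)
        exact Finset.single_le_sum (f := fun a => ∑ b, |Γ t₀ a b|)
          (fun a _ => Finset.sum_nonneg fun b _ => abs_nonneg _) (Finset.mem_univ k)
      have hwj : ∀ j, -(ε * E) ≤ h t₀ j - z t₀ j := by
        intro j
        have := ge_at j
        simp only [hfdef, hEdef] at this ⊢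
        linarith
      have hwk : h t₀ k - z t₀ k = -(ε * E) := by
        simp only [hfdef, hEdef] at eq_at
        linarith
      have hterm : ∀ j, -(|Γ t₀ k j| * (ε * E)) ≤ Γ t₀ k j * (h t₀ j - z t₀ j) := by
        intro j
        by_cases hjk : j = k
        · subst hjk
          rw [hwk]
          nlinarith [le_abs_self (Γ t₀ j j), mul_pos hε hEpos]
        · have hΓ0 : 0 ≤ Γ t₀ k j := hΓM t₀ ht₀0 k j (fun e => hjk e.symm)
          have := hwj j
          nlinarith [le_abs_self (Γ t₀ k j), mul_pos hε hEpos]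
      have hsum : -((∑ j, |Γ t₀ k j|) * (ε * E)) ≤ ∑ j, Γ t₀ k j * (h t₀ j - z t₀ j) := by
        have h1 := Finset.sum_le_sum (fun j (_ : j ∈ Finset.univ) => hterm j)
        have h2 : ∑ j, -(|Γ t₀ k j| * (ε * E)) = -((∑ j, |Γ t₀ k j|) * (ε * E)) := by
          rw [Finset.sum_mul, Finset.sum_neg_distrib]
        linarith [h1, h2.symm ▸ h1]
      have hsplit : ∑ j, Γ t₀ k j * h t₀ j - ∑ j, Γ t₀ k j * z t₀ j
          = ∑ j, Γ t₀ k j * (h t₀ j - z t₀ j) := by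
        rw [← Finset.sum_sub_distrib]
        exact Finset.sum_congr rfl fun j _ => (mul_sub _ _ _).symm
      have hmul : (∑ j, |Γ t₀ k j|) * (ε * E) ≤ B s₀ * (ε * E) :=
        mul_le_mul_of_nonneg_right hrow (by positivity)
      have hC' : ε * (E * C) = ε * E * B s₀ + ε * E := by rw [hCdef]; ring
      have hineq := hhineq t₀ ht₀0 k
      have hdpos : 0 < d := by
        rw [hddef]
        nlinarith [mul_pos hε hEpos]
      -- contradiction via slope from the left
      have hslope := hasDerivAt_iff_tendsto_slope.1 hdf
      have hslope' : Tendsto (slope (f k) t₀) (𝓝[<] t₀) (𝓝 d) :=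
        hslope.mono_left (nhdsWithin_mono _ (fun s hs => ne_of_lt hs))
      have hev : ∀ᶠ s in 𝓝[<] t₀, 0 < slope (f k) t₀ s :=
        hslope'.eventually (lt_mem_nhds hdpos)
      have hev2 : ∀ᶠ s in 𝓝[<] t₀, s ∈ Ioo 0 t₀ :=
        eventually_of_mem (Ioo_mem_nhdsLT_of_mem (right_mem_Ioc.2 ht₀pos)) (fun _ hs => hs)
      obtain ⟨s, hss, hsIoo⟩ := (hev.and hev2).exists
      have hfs : f k s < 0 := by
        have hslopeval : slope (f k) t₀ s = f k s / (s - t₀) := by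
          rw [slope_def_field, eq_at]; ring_nf
        rw [hslopeval] at hss
        have hneg : s - t₀ < 0 := by linarith [hsIoo.2]
        by_contra hge
        push_neg at hge
        have : f k s / (s - t₀) ≤ 0 := div_nonpos_of_nonneg_of_nonpos hge hneg.le
        linarith
      exact absurd (pos_before s hsIoo.1.le hsIoo.2 k) (not_lt.2 hfs.le)
    -- S empty gives positivity at t
    have htnotS : t ∉ S := hSempty ▸ Set.notMem_empty t
    simp only [hSdef, Set.mem_setOf_eq, not_and, not_exists, not_le] at htnotS
    exact htnotS ⟨ht, le_refl t⟩ i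
  by_contra hlt
  push_neg at hlt
  have hεpos : 0 < (z t i - h t i) / Real.exp (C * t) := div_pos (by linarith) (Real.exp_pos _)
  have := main _ hεpos
  rw [div_mul_cancel₀ _ (Real.exp_pos (C * t)).ne'] at this
  linarith
end

section
/- Let h : [0,∞) → R^q be differentiable and Γ : [0,∞) → R^{q×q} continuous with Γ(t) Metzler for all t. If h(0) ≥ 0 componentwise and h'(t) ≥ Γ(t) h(t) componentwise for all t ≥ 0, then h(t) ≥ 0 componentwise for all t ≥ 0. -/
open Set Filter Topology Matrix Real

theorem HasDerivWithinAt.eventually_nhdsGT_lt {f : ℝ → ℝ} {f' x : ℝ}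
    (hf : HasDerivWithinAt f f' (Ici x) x) (hf' : 0 < f') : ∀ᶠ y in 𝓝[>] x, f x < f y := by
  have hslope := (hasDerivWithinAt_iff_tendsto_slope' (lt_irrefl x)).1 hf.Ioi_of_Ici
  filter_upwards [hslope.eventually (eventually_gt_nhds hf'), self_mem_nhdsWithin]
    with y hy (hxy : x < y)
  rw [slope_def_field] at hy
  exact sub_pos.1 ((div_pos_iff_of_pos_right (sub_pos.2 hxy)).1 hy)

theorem nonneg_on_Icc_of_hasDerivWithinAt_pos {ι : Type*} [Finite ι] {v v' : ℝ → ι → ℝ}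
    {a b : ℝ} (hv : ContinuousOn v (Icc a b))
    (hv' : ∀ x ∈ Ico a b, ∀ i, HasDerivWithinAt (fun t => v t i) (v' x i) (Ici x) x)
    (hpos : ∀ x ∈ Ico a b, 0 ≤ v x → ∀ i, v x i = 0 → 0 < v' x i) (ha : 0 ≤ v a) :
    ∀ x ∈ Icc a b, 0 ≤ v x := by
  have hclosed : IsClosed ({x | 0 ≤ v x} ∩ Icc a b) := by
    rw [inter_comm]
    exact hv.preimage_isClosed_of_isClosed isClosed_Icc isClosed_Ici
  refine fun x hx => hclosed.Icc_subset_of_forall_mem_nhdsWithin ha ?_ hx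
  rintro x ⟨hx, hxab⟩
  suffices ∀ i, ∀ᶠ y in 𝓝[>] x, 0 ≤ v y i from (eventually_all.2 this).mono fun y hy => hy
  intro i
  rcases (hx i).eq_or_lt with hzero | hpos'
  · filter_upwards [(hv' x hxab i).eventually_nhdsGT_lt (hpos x hxab hx i hzero.symm)]
      with y hy using hzero.le.trans hy.le
  · have hcont := ((hv' x hxab i).continuousWithinAt.mono Ioi_subset_Ici_self).tendsto
    filter_upwards [hcont.eventually (eventually_gt_nhds hpos')] with y hy using hy.le

theorem IsMetzler.mulVec_apply_nonneg {q : ℕ} {K : Matrix (Fin q) (Fin q) ℝ} (hK : IsMetzler K)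
    {x : Fin q → ℝ} (hx : 0 ≤ x) {i : Fin q} (hxi : x i = 0) : 0 ≤ (K *ᵥ x) i := by
  rw [mulVec, dotProduct]
  refine Finset.sum_nonneg fun j _ => ?_
  rcases eq_or_ne i j with rfl | hij
  · simp [hxi]
  · exact mul_nonneg (hK i j hij) (hx j)

theorem IsCompact.exists_forall_sum_row_lt {X ι : Type*} [TopologicalSpace X] [Fintype ι]
    {s : Set X} (hs : IsCompact s) {Γ : X → Matrix ι ι ℝ} (hΓ : ContinuousOn Γ s) :
    ∃ μ, ∀ t ∈ s, ∀ i, ∑ j, Γ t i j < μ := by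
  have hrow : ContinuousOn (fun t i => ∑ j, Γ t i j) s :=
    continuousOn_pi.2 fun i => continuousOn_finsetSum _ fun j _ =>
      (continuous_apply_apply i j).comp_continuousOn hΓ
  obtain ⟨C, hC⟩ := hs.exists_bound_of_continuousOn hrow
  refine ⟨C + 1, fun t ht i => ?_⟩
  have := (Real.le_norm_self _).trans ((norm_le_pi_norm _ i).trans (hC t ht))
  linarith

theorem add_mul_exp_nonneg_of_isMetzler {q : ℕ} {h h' : ℝ → Fin q → ℝ}
    {Γ : ℝ → Matrix (Fin q) (Fin q) ℝ} {a b μ ε : ℝ} (hε : 0 < ε)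
    (hΓ : ∀ t ∈ Ico a b, IsMetzler (Γ t)) (hμ : ∀ t ∈ Ico a b, ∀ i, ∑ j, Γ t i j < μ)
    (hcont : ContinuousOn h (Icc a b))
    (hh' : ∀ t ∈ Ico a b, ∀ i, HasDerivWithinAt (fun s => h s i) (h' t i) (Ici t) t)
    (hle : ∀ t ∈ Ico a b, Γ t *ᵥ h t ≤ h' t) (ha : 0 ≤ h a) :
    ∀ t ∈ Icc a b, ∀ i, 0 ≤ h t i + ε * exp (μ * t) := by
  set v : ℝ → Fin q → ℝ := fun t i => h t i + ε * exp (μ * t)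
  have hv : ContinuousOn v (Icc a b) :=
    hcont.add (continuousOn_pi.2 fun _ => by fun_prop)
  have hv' : ∀ t ∈ Ico a b, ∀ i, HasDerivWithinAt (fun s => v s i)
      (h' t i + ε * (exp (μ * t) * μ)) (Ici t) t := fun t ht i =>
    (hh' t ht i).add <|
      (((hasDerivAt_id' t).const_mul μ).exp.const_mul ε).hasDerivWithinAt.congr_deriv (by ring)
  refine nonneg_on_Icc_of_hasDerivWithinAt_pos hv hv' (fun t ht hvt i hvi => ?_) ?_
  · have hsplit : (Γ t *ᵥ v t) i = (Γ t *ᵥ h t) i + ε * exp (μ * t) * ∑ j, Γ t i j := by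
      simp only [v, mulVec, dotProduct, mul_add, Finset.sum_add_distrib, ← Finset.sum_mul]
      ring
    have hgap : 0 < ε * exp (μ * t) * (μ - ∑ j, Γ t i j) :=
      mul_pos (mul_pos hε (exp_pos _)) (sub_pos.2 (hμ t ht i))
    linarith [(hΓ t ht).mulVec_apply_nonneg hvt hvi, hle t ht i]
  · exact fun i => add_nonneg (ha i) (mul_nonneg hε.le (exp_pos _).le)

theorem stmt8 {q : ℕ}
    (h : ℝ → Fin q → ℝ)
    (Γ : ℝ → Matrix (Fin q) (Fin q) ℝ)
    (hΓc : Continuous Γ)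
    (hΓM : ∀ t, 0 ≤ t → IsMetzler (Γ t))
    (hhdiff : ∀ i, Differentiable ℝ (fun t => h t i))
    (hhineq : ∀ t, 0 ≤ t → ∀ i,
      ∑ j, Γ t i j * h t j ≤ deriv (fun s => h s i) t)
    (h0 : ∀ i, 0 ≤ h 0 i) :
    ∀ t, 0 ≤ t → ∀ i, 0 ≤ h t i := by
  intro T hT i
  obtain ⟨μ, hμ⟩ := isCompact_Icc.exists_forall_sum_row_lt (hΓc.continuousOn (s := Icc 0 T))
  have hperturbed : ∀ ε > 0, 0 ≤ h T i + ε * exp (μ * T) := fun ε hε =>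
    add_mul_exp_nonneg_of_isMetzler hε (fun t ht => hΓM t ht.1)
      (fun t ht => hμ t (Ico_subset_Icc_self ht))
      (continuous_pi fun j => (hhdiff j).continuous).continuousOn
      (fun t _ j => (hhdiff j t).hasDerivAt.hasDerivWithinAt) (fun t ht => hhineq t ht.1) h0
      T ⟨hT, le_rfl⟩ i
  refine le_of_forall_pos_le_add fun ε hε => ?_
  simpa [div_mul_cancel₀ ε (exp_pos (μ * T)).ne'] using
    hperturbed (ε / exp (μ * T)) (by positivity)
end
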